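/- (Lemma A) Let n ≥ 2 and let W_1, …, W_n be subsets of M satisfying condition (SD). For any i ∈ {1,…,n−1}, if W_i ∩ W_{i+1} = ∅, then W_{i+1} ∩ (W_1 ∪ ⋯ ∪ W_i) = ∅. -/

import Mathlib

abbrev World (P : Type) := P → Bool

def minSet {P : Type} (S : Set (World P)) (le : World P → World P → Prop) :
    Set (World P) :=
  {r | r ∈ S ∧ ∀ r' ∈ S, le r r'}

def TotalPreorder {P : Type} (le : World P → World P → Prop) : Prop :=
  Reflexive le ∧ Transitive le ∧ ∀ r r', le r r' ∨ le r' r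

def Faithful {P : Type} (le : World P → World P → Prop) (W : Set (World P)) : Prop :=
  minSet Set.univ le = W

def strictPart {P : Type} (le : World P → World P → Prop) (r r' : World P) : Prop :=
  le r r' ∧ ¬ le r' r

/-- The full-meet preorder of a belief set `W`. -/
def fullMeet {P : Type} (W : Set (World P)) : World P → World P → Prop :=
  fun r r' => r ∈ W ∨ r' ∉ W

def distB {P : Type} (W1 W2 : Set (World P)) : Set (World P) :=
  (W1 \ W2) ∪ (W2 \ W1)

/-- Condition (SD) of the paper. -/
def SD {P : Type} {n : ℕ} (W : Fin n → Set (World P)) : Prop :=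
  ∀ i j m : Fin n, i < j → j < m → distB (W j) (W m) ⊆ distB (W i) (W m)

/-- Lexicographic revision of the preorder `le` by the (nonempty) input `A`. -/
def lexRev {P : Type} (le : World P → World P → Prop) (A : Set (World P)) :
    World P → World P → Prop :=
  fun r r' => (r ∈ A ∧ r' ∉ A) ∨ ((r ∈ A ↔ r' ∈ A) ∧ le r r')

/-- `le''` is the moderate contraction of `le` (faithful to `R`) by `B`:
conditions (C1), (C2), (MC) and faithfulness to `R ∪ min(M\B, le)`. -/
def IsModCon {P : Type} (le : World P → World P → Prop) (R B : Set (World P))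
    (le'' : World P → World P → Prop) : Prop :=
  TotalPreorder le'' ∧
  (∀ r r', r ∈ B → r' ∈ B → (le'' r r' ↔ le r r')) ∧
  (∀ r r', r ∉ B → r' ∉ B → (le'' r r' ↔ le r r')) ∧
  (∀ r r', r ∉ B → r' ∈ B → r' ∉ R ∪ minSet Bᶜ le → strictPart le'' r r') ∧
  minSet Set.univ le'' = R ∪ minSet Bᶜ le

theorem inter_subset_of_distB_subset {P : Type} {A B C : Set (World P)}
    (h : distB B C ⊆ distB A C) : A ∩ C ⊆ B := by
  rintro r ⟨hrA, hrC⟩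
  by_contra hrB
  rcases h (Or.inr ⟨hrC, hrB⟩) with ⟨_, hrC'⟩ | ⟨_, hrA'⟩
  · exact hrC' hrC
  · exact hrA' hrA

theorem SD.inter_subset_of_le {P : Type} {n : ℕ} {W : Fin n → Set (World P)} (hSD : SD W)
    {j k m : Fin n} (hjk : j ≤ k) (hkm : k < m) : W j ∩ W m ⊆ W k := by
  rcases hjk.lt_or_eq with hjk | rfl
  · exact inter_subset_of_distB_subset (hSD j k m hjk hkm)
  · exact Set.inter_subset_left

theorem statement3 {P : Type} {n : ℕ}
    (W : Fin n → Set (World P)) (hSD : SD W)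
    (i : ℕ) (hi : i + 1 < n)
    (hdisj : W ⟨i, by omega⟩ ∩ W ⟨i + 1, hi⟩ = ∅) :
    W ⟨i + 1, hi⟩ ∩ (⋃ (j : Fin n) (_ : (j : ℕ) ≤ i), W j) = ∅ := by
  refine Set.eq_empty_of_forall_notMem fun r ⟨hr, hrU⟩ => ?_
  obtain ⟨j, hj, hrj⟩ := Set.mem_iUnion₂.mp hrU
  have hri : r ∈ W ⟨i, by omega⟩ :=
    hSD.inter_subset_of_le (k := ⟨i, by omega⟩) (Fin.le_def.mpr hj) (Fin.lt_def.mpr (by simp))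
      ⟨hrj, hr⟩
  exact hdisj.subset ⟨hri, hr⟩
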